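/- arXiv:math/0310045 — 2 statements merged into one kernel-verified Lean document; each statement's English description precedes it below -/
import Mathlib

section
/- Let k be a field, p ∈ k a nonzero element, and let T = k⟨x, y, z⟩/(yx − pxy, xz − zx, zy − yz). Set α = x² + x(1+p)z + pz² and β = x(z+y) + z(z+py). Then in T: (y+z)·α = (x+z)·(x(p²y + z) + pz(y+z)) and (y+z)·β = (x+z)·(y+z)·(py+z). -/
/-!
The relations let every monomial be rewritten, at the cost of a power of `p`, in the normal
order `x^a y^b z^c`: `y` moves past `x` by `y x = p x y`, and `z` commutes with both. After
expanding both sides and normal-ordering, each identity is a linear identity between the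
same few normal monomials.
-/

section QuantumPlane

variable {R T : Type*} [CommSemiring R] [Semiring T] [Algebra R T]

theorem mul_mul_of_mul_eq_smul {p : R} {x y : T} (hyx : y * x = p • (x * y)) (t : T) :
    y * (x * t) = p • (x * (y * t)) := by
  rw [← mul_assoc, hyx, smul_mul_assoc, mul_assoc]

variable {p : R} {x y z : T}

theorem add_mul_quantum_alpha (hyx : y * x = p • (x * y)) (hxz : Commute x z)
    (hzy : Commute z y) :
    (y + z) * (x ^ 2 + (1 + p) • (x * z) + p • z ^ 2) =
      (x + z) * (x * (p ^ 2 • y + z) + p • (z * (y + z))) := by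
  simp only [pow_two, mul_add, add_mul, smul_add, mul_smul_comm, hyx, mul_mul_of_mul_eq_smul hyx,
    hzy.eq, hzy.left_comm, hxz.symm.eq, hxz.symm.left_comm, smul_smul, add_smul, one_smul]
  module

theorem add_mul_quantum_beta (hyx : y * x = p • (x * y)) (hxz : Commute x z)
    (hzy : Commute z y) :
    (y + z) * (x * (z + y) + z * (z + p • y)) = (x + z) * ((y + z) * (p • y + z)) := by
  simp only [mul_add, add_mul, smul_add, mul_smul_comm, mul_mul_of_mul_eq_smul hyx, hzy.eq,
    hzy.left_comm, hxz.symm.left_comm]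
  module

end QuantumPlane

theorem quantum_plane_identities_general {k : Type*} [Field k] (p : k)
    {T : Type*} [Ring T] [Algebra k T] (x y z : T)
    (hyx : y * x = p • (x * y)) (hxz : x * z = z * x) (hzy : z * y = y * z) :
    (y + z) * (x ^ 2 + (1 + p) • (x * z) + p • z ^ 2) =
        (x + z) * (x * (p ^ 2 • y + z) + p • (z * (y + z))) ∧
      (y + z) * (x * (z + y) + z * (z + p • y)) =
        (x + z) * ((y + z) * (p • y + z)) :=
  ⟨add_mul_quantum_alpha hyx hxz hzy, add_mul_quantum_beta hyx hxz hzy⟩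

/-- In the algebra `T = k⟨x,y,z⟩/(yx − pxy, xz − zx, zy − yz)` (formalized as any
`k`-algebra with elements `x, y, z` satisfying these relations), setting
`α = x² + x(1+p)z + pz²` and `β = x(z+y) + z(z+py)`, one has
`(y+z)·α = (x+z)·(x(p²y + z) + pz(y+z))` and
`(y+z)·β = (x+z)·(y+z)·(py+z)`. -/
theorem quantum_plane_identities {k : Type*} [Field k] (p : k) (hp : p ≠ 0)
    {T : Type*} [Ring T] [Algebra k T] (x y z : T)
    (hyx : y * x = p • (x * y)) (hxz : x * z = z * x) (hzy : z * y = y * z) :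
    (y + z) * (x ^ 2 + (1 + p) • (x * z) + p • z ^ 2) =
        (x + z) * (x * (p ^ 2 • y + z) + p • (z * (y + z))) ∧
      (y + z) * (x * (z + y) + z * (z + p • y)) =
        (x + z) * ((y + z) * (p • y + z)) :=
  quantum_plane_identities_general p x y z hyx hxz hzy
end

section
/- Let A = ∪_{i≥0} Λᵢ be a filtered k-algebra (Λᵢ ⊆ Λ_{i+1}, ΛᵢΛⱼ ⊆ Λ_{i+j}) such that A and gr A = ⊕ᵢΛᵢ/Λ_{i−1} are both Ore domains. Let M = ∪Θᵢ be a filtered right ideal of A (Θᵢ = Θᵢ ∩ M, ΘᵢΛⱼ ⊆ Θ_{i+j}) such that either each Θᵢ is finite-dimensional over k or gr_Θ M is a finitely generated gr A-module. Assume there is r₀ ∈ ℕ such that (gr_Θ M)_{≥ r₀} is a torsion-free right gr(A)-module. Then there exists an integer j such that Θᵢ = Λ_{i+j} ∩ M for all sufficiently large i. -/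
/-!
Write `deg_Θ m` and `deg_Λ m` for the degrees of `m ∈ M` in the two filtrations. For `m, m'`
with `Θ`-degrees at least `r₀`, the Ore condition gives `m x = m' y ≠ 0`. Since `gr A` is a
domain and `(gr_Θ M)_{≥ r₀}` is torsion-free, multiplying by `x` adds `deg_Λ x` to both degrees
of `m`, and likewise for `m'` and `y`; comparing the two degrees of `m x = m' y` shows that
`deg_Λ m - deg_Θ m = j` is the same for all such `m`. The finiteness hypothesis puts `Θ r₀`
inside some `Λ c`, which controls the elements of small `Θ`-degree, so `Θ i = Λ (i + j) ∩ M`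
for large `i`.
-/

/-- `lowerFil Λ n` is `Λ (n-1)`, with the convention `Λ (-1) = ⊥`. -/
def lowerFil {σ : Type*} [Bot σ] (Λ : ℕ → σ) : ℕ → σ
  | 0 => ⊥
  | n + 1 => Λ n

section Filtration

variable {R E : Type*} [Semiring R] [AddCommMonoid E] [Module R E] {F : ℕ → Submodule R E}

theorem zero_mem_lowerFil (F : ℕ → Submodule R E) : ∀ n, (0 : E) ∈ lowerFil F n
  | 0 => (⊥ : Submodule R E).zero_mem
  | n + 1 => (F n).zero_mem

/-- `a` has degree `n` for the filtration `F`: its symbol in `gr_F` is nonzero of degree `n`. -/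
structure HasFilDeg (F : ℕ → Submodule R E) (a : E) (n : ℕ) : Prop where
  mem : a ∈ F n
  not_mem_lowerFil : a ∉ lowerFil F n

namespace HasFilDeg

variable {a : E} {n : ℕ}

theorem ne_zero (h : HasFilDeg F a n) : a ≠ 0 := by
  rintro rfl
  exact h.not_mem_lowerFil (zero_mem_lowerFil F n)

theorem le_of_mem (hF : Monotone F) (h : HasFilDeg F a n) {m : ℕ} (hm : a ∈ F m) : n ≤ m := by
  by_contra! hlt
  obtain ⟨n, rfl⟩ : ∃ n', n = n' + 1 := ⟨n - 1, by omega⟩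
  exact h.not_mem_lowerFil (hF (Nat.le_of_lt_succ hlt) hm)

theorem unique (hF : Monotone F) {n' : ℕ} (h : HasFilDeg F a n) (h' : HasFilDeg F a n') :
    n = n' :=
  le_antisymm (h.le_of_mem hF h'.mem) (h'.le_of_mem hF h.mem)

end HasFilDeg

theorem exists_hasFilDeg {a : E} (ha : a ≠ 0) (hex : ∃ n, a ∈ F n) : ∃ n, HasFilDeg F a n := by
  classical
  refine ⟨Nat.find hex, Nat.find_spec hex, ?_⟩
  cases hn : Nat.find hex with
  | zero => simpa [lowerFil] using ha
  | succ m => exact fun h => absurd (Nat.find_min' hex h) (by omega)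

theorem exists_le_of_fg (hF : Monotone F) (hexh : ∀ a, ∃ n, a ∈ F n) {V : Submodule R E}
    (hV : V.FG) : ∃ c, V ≤ F c := by
  classical
  obtain ⟨t, rfl⟩ := hV
  choose f hf using hexh
  exact ⟨t.sup f, Submodule.span_le.mpr fun x hx => hF (Finset.le_sup hx) (hf x)⟩

end Filtration

section FilteredAlgebra

variable {k A : Type*} [CommRing k] [Ring A] [Algebra k A] {Λ Θ : ℕ → Submodule k A}

theorem exists_le_add_of_generated {ι : Type*} [Fintype ι] (hΛmono : Monotone Λ)
    (hΛexh : ∀ a : A, ∃ i, a ∈ Λ i)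
    (hΛmul : ∀ i j : ℕ, ∀ a ∈ Λ i, ∀ b ∈ Λ j, a * b ∈ Λ (i + j))
    (mgen : ι → A) (dg : ι → ℕ)
    (hgen : ∀ i, ∀ x ∈ Θ i, ∃ a : ι → A,
      (∀ j, a j ∈ Λ (i - dg j)) ∧ x - ∑ j, mgen j * a j ∈ lowerFil Θ i) :
    ∃ c, ∀ i, Θ i ≤ Λ (c + i) := by
  classical
  choose D hD using fun j => hΛexh (mgen j)
  set c := Finset.univ.sup D
  have step : ∀ i, lowerFil Θ i ≤ Λ (c + i) → Θ i ≤ Λ (c + i) := by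
    intro i hlow x hx
    obtain ⟨a, ha, hrest⟩ := hgen i x hx
    have hsum : ∑ j, mgen j * a j ∈ Λ (c + i) := Submodule.sum_mem _ fun j _ => by
      have hDc : D j ≤ c := Finset.le_sup (Finset.mem_univ j)
      exact hΛmono (by omega) (hΛmul _ _ _ (hD j) _ (ha j))
    simpa using add_mem (hlow hrest) hsum
  refine ⟨c, fun i => ?_⟩
  induction i with
  | zero => exact step 0 (by simp [lowerFil])
  | succ i ih => exact step (i + 1) (ih.trans (hΛmono (by omega)))

section DegreeShift

variable (hΛmono : Monotone Λ) (hΛexh : ∀ a : A, ∃ i, a ∈ Λ i) (hΘmono : Monotone Θ)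
  (hAore : ∀ a b : A, a ≠ 0 → b ≠ 0 → ∃ x y : A, a * x = b * y ∧ a * x ≠ 0)
  (hΛdeg : ∀ (u v : ℕ) (a b : A), HasFilDeg Λ a u → HasFilDeg Λ b v → HasFilDeg Λ (a * b) (u + v))
  {r₀ : ℕ}
  (hΘdeg : ∀ (r t : ℕ) (m a : A), r₀ ≤ r → HasFilDeg Θ m r → HasFilDeg Λ a t →
    HasFilDeg Θ (m * a) (r + t))
include hΛmono hΛexh hΘmono hAore hΛdeg hΘdeg

theorem add_eq_add_of_hasFilDeg {m m' : A} {p p' q q' : ℕ} (hp : r₀ ≤ p) (hp' : r₀ ≤ p')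
    (hmΘ : HasFilDeg Θ m p) (hmΛ : HasFilDeg Λ m q)
    (hm'Θ : HasFilDeg Θ m' p') (hm'Λ : HasFilDeg Λ m' q') :
    q + p' = q' + p := by
  obtain ⟨x, y, hxy, hne⟩ := hAore m m' hmΘ.ne_zero hm'Θ.ne_zero
  obtain ⟨s, hx⟩ := exists_hasFilDeg (right_ne_zero_of_mul hne) (hΛexh x)
  obtain ⟨t, hy⟩ := exists_hasFilDeg (right_ne_zero_of_mul (hxy ▸ hne)) (hΛexh y)
  have hΘeq : p + s = p' + t :=
    (hΘdeg _ _ _ _ hp hmΘ hx).unique hΘmono (hxy ▸ hΘdeg _ _ _ _ hp' hm'Θ hy)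
  have hΛeq : q + s = q' + t :=
    (hΛdeg _ _ _ _ hmΛ hx).unique hΛmono (hxy ▸ hΛdeg _ _ _ _ hm'Λ hy)
  omega

theorem exists_degree_shift :
    ∃ j : ℤ, ∀ m p q, r₀ ≤ p → HasFilDeg Θ m p → HasFilDeg Λ m q → (q : ℤ) = p + j := by
  by_cases h : ∃ m p q, r₀ ≤ p ∧ HasFilDeg Θ m p ∧ HasFilDeg Λ m q
  · obtain ⟨m₀, p₀, q₀, hp₀, hΘ₀, hΛ₀⟩ := h
    refine ⟨q₀ - p₀, fun m p q hp hΘ hΛ => ?_⟩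
    have := add_eq_add_of_hasFilDeg hΛmono hΛexh hΘmono hAore hΛdeg hΘdeg hp hp₀ hΘ hΛ hΘ₀ hΛ₀
    omega
  · exact ⟨0, fun m p q hp hΘ hΛ => absurd ⟨m, p, q, hp, hΘ, hΛ⟩ h⟩

end DegreeShift

theorem eventually_eq_inf_of_degree_shift (hΛmono : Monotone Λ) (hΛexh : ∀ a : A, ∃ i, a ∈ Λ i)
    {M : Submodule k A} (hΘM : ∀ i, Θ i ≤ M) (hΘmono : Monotone Θ)
    (hΘexh : ∀ m ∈ M, ∃ i, m ∈ Θ i) {r₀ c : ℕ} (hc : Θ r₀ ≤ Λ c) {j : ℤ}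
    (hj : ∀ m p q, r₀ ≤ p → HasFilDeg Θ m p → HasFilDeg Λ m q → (q : ℤ) = p + j) :
    ∃ N : ℕ, ∀ i : ℕ, N ≤ i → 0 ≤ (i : ℤ) + j ∧ Θ i = Λ ((i : ℤ) + j).toNat ⊓ M := by
  refine ⟨r₀ + c + j.natAbs, fun i hi => ⟨by omega, le_antisymm (fun m hm => ?_) fun m hm => ?_⟩⟩
  · refine ⟨?_, hΘM i hm⟩
    rcases eq_or_ne m 0 with rfl | hm0
    · exact zero_mem _
    obtain ⟨p, hp⟩ := exists_hasFilDeg hm0 ⟨i, hm⟩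
    rcases le_or_gt r₀ p with hrp | hpr
    · obtain ⟨q, hq⟩ := exists_hasFilDeg hm0 (hΛexh m)
      have hqp := hj m p q hrp hp hq
      have hpi := hp.le_of_mem hΘmono hm
      exact hΛmono (by omega) hq.mem
    · exact hΛmono (by omega) (hc (hΘmono hpr.le hp.mem))
  · obtain ⟨hmΛ, hmM⟩ := Submodule.mem_inf.mp hm
    rcases eq_or_ne m 0 with rfl | hm0
    · exact zero_mem _
    obtain ⟨p, hp⟩ := exists_hasFilDeg hm0 (hΘexh m hmM)
    obtain ⟨q, hq⟩ := exists_hasFilDeg hm0 (hΛexh m)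
    have hqn := hq.le_of_mem hΛmono hmΛ
    by_cases hpi : p ≤ i
    · exact hΘmono hpi hp.mem
    · have := hj m p q (by omega) hp hq
      omega

end FilteredAlgebra

theorem canonical_filtration_general
    {k A : Type*} [Field k] [Ring A] [Algebra k A]
    (Λ : ℕ → Submodule k A)
    (hΛmono : Monotone Λ)
    (hΛexh : ∀ a : A, ∃ i, a ∈ Λ i)
    (hΛmul : ∀ i j : ℕ, ∀ a ∈ Λ i, ∀ b ∈ Λ j, a * b ∈ Λ (i + j))
    -- `A` is a (right) Ore domain
    (hAore : ∀ a b : A, a ≠ 0 → b ≠ 0 → ∃ x y : A, a * x = b * y ∧ a * x ≠ 0)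
    -- `gr A` is a domain: the product of nonzero homogeneous elements of degrees
    -- `u` and `v` is a nonzero homogeneous element of degree `u + v`
    (hgrdom : ∀ (u v : ℕ) (a b : A),
      a ∈ Λ u → a ∉ lowerFil Λ u → b ∈ Λ v → b ∉ lowerFil Λ v →
        a * b ∉ lowerFil Λ (u + v))
    (M : Submodule k A)
    -- `Θ` is a filtration of `M`
    (Θ : ℕ → Submodule k A)
    (hΘM : ∀ i, Θ i ≤ M)
    (hΘmono : Monotone Θ)
    (hΘexh : ∀ m ∈ M, ∃ i, m ∈ Θ i)
    (hΘmul : ∀ i j : ℕ, ∀ m ∈ Θ i, ∀ a ∈ Λ j, m * a ∈ Θ (i + j))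
    -- finiteness: each `Θᵢ` is finite-dimensional over `k`, or
    -- `gr_Θ M` is generated over `gr A` by homogeneous elements `mgen j` of
    -- degrees `dg j`
    (hfin : (∀ i, FiniteDimensional k (Θ i)) ∨
      (∃ (s : ℕ) (mgen : Fin s → A) (dg : Fin s → ℕ),
        (∀ j, mgen j ∈ Θ (dg j)) ∧
        ∀ (i : ℕ), ∀ x ∈ Θ i, ∃ a : Fin s → A,
          (∀ j, a j ∈ Λ (i - dg j) ∧ mgen j * a j ∈ Θ i) ∧
          x - (∑ j, mgen j * a j) ∈ lowerFil Θ i))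
    -- `(gr_Θ M)_{≥ r₀}` is torsion-free over `gr A`
    (r₀ : ℕ)
    (htf : ∀ r : ℕ, r₀ ≤ r → ∀ m ∈ Θ r, m ∉ lowerFil Θ r →
      ∀ (t : ℕ), ∀ a ∈ Λ t, a ∉ lowerFil Λ t →
        m * a ∉ lowerFil Θ (r + t)) :
    ∃ (j : ℤ) (N : ℕ), ∀ i : ℕ, N ≤ i →
      0 ≤ (i : ℤ) + j ∧ Θ i = Λ ((i : ℤ) + j).toNat ⊓ M := by
  obtain ⟨c, hc⟩ : ∃ c, Θ r₀ ≤ Λ c := by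
    rcases hfin with hfd | ⟨s, mgen, dg, -, hgen⟩
    · exact exists_le_of_fg hΛmono hΛexh ((Submodule.fg_iff_finiteDimensional _).mpr (hfd r₀))
    · obtain ⟨c, hc⟩ := exists_le_add_of_generated hΛmono hΛexh hΛmul mgen dg fun i x hx =>
        (hgen i x hx).imp fun a ha => ⟨fun j => (ha.1 j).1, ha.2⟩
      exact ⟨c + r₀, hc r₀⟩
  obtain ⟨j, hj⟩ := exists_degree_shift hΛmono hΛexh hΘmono hAore
    (fun u v a b ha hb => ⟨hΛmul u v a ha.mem b hb.mem,
      hgrdom u v a b ha.mem ha.not_mem_lowerFil hb.mem hb.not_mem_lowerFil⟩)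
    (fun r t m a hr hm ha => ⟨hΘmul r t m hm.mem a ha.mem,
      htf r hr m hm.mem hm.not_mem_lowerFil t a ha.mem ha.not_mem_lowerFil⟩)
  exact ⟨j, eventually_eq_inf_of_degree_shift hΛmono hΛexh hΘM hΘmono hΘexh hc hj⟩

/-- Let `A = ∪ Λᵢ` be a filtered `k`-algebra such that `A` and `gr A` are both Ore
domains (the conditions on `gr A` are expressed via homogeneous elements:
`a ∈ Λ u`, `a ∉ lowerFil Λ u` means the class of `a` in `gr A` is a nonzero
homogeneous element of degree `u`).  Let `M = ∪ Θᵢ` be a filtered right ideal of `A`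
such that either each `Θᵢ` is finite-dimensional over `k`, or `gr_Θ M` is a finitely
generated `gr A`-module.  If `(gr_Θ M)_{≥ r₀}` is a torsion-free right `gr A`-module
for some `r₀`, then there exists `j ∈ ℤ` such that `Θᵢ = Λ_{i+j} ∩ M` for all
sufficiently large `i`. -/
theorem canonical_filtration
    {k A : Type*} [Field k] [Ring A] [Algebra k A] [IsDomain A]
    (Λ : ℕ → Submodule k A)
    (hΛmono : Monotone Λ)
    (hΛexh : ∀ a : A, ∃ i, a ∈ Λ i)
    (hΛone : (1 : A) ∈ Λ 0)
    (hΛmul : ∀ i j : ℕ, ∀ a ∈ Λ i, ∀ b ∈ Λ j, a * b ∈ Λ (i + j))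
    -- `A` is a (right) Ore domain
    (hAore : ∀ a b : A, a ≠ 0 → b ≠ 0 → ∃ x y : A, a * x = b * y ∧ a * x ≠ 0)
    -- `gr A` is a domain: the product of nonzero homogeneous elements of degrees
    -- `u` and `v` is a nonzero homogeneous element of degree `u + v`
    (hgrdom : ∀ (u v : ℕ) (a b : A),
      a ∈ Λ u → a ∉ lowerFil Λ u → b ∈ Λ v → b ∉ lowerFil Λ v →
        a * b ∉ lowerFil Λ (u + v))
    -- `gr A` is (right) Ore on homogeneous elements
    (hgrore : ∀ (u v : ℕ) (a b : A),
      a ∈ Λ u → a ∉ lowerFil Λ u → b ∈ Λ v → b ∉ lowerFil Λ v →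
        ∃ (s t : ℕ) (x y : A), x ∈ Λ s ∧ y ∈ Λ t ∧ u + s = v + t ∧
          a * x - b * y ∈ lowerFil Λ (u + s) ∧ a * x ∉ lowerFil Λ (u + s))
    -- `M` is a right ideal of `A`
    (M : Submodule k A)
    (hMideal : ∀ m ∈ M, ∀ a : A, m * a ∈ M)
    -- `Θ` is a filtration of `M`
    (Θ : ℕ → Submodule k A)
    (hΘM : ∀ i, Θ i ≤ M)
    (hΘmono : Monotone Θ)
    (hΘexh : ∀ m ∈ M, ∃ i, m ∈ Θ i)
    (hΘmul : ∀ i j : ℕ, ∀ m ∈ Θ i, ∀ a ∈ Λ j, m * a ∈ Θ (i + j))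
    -- finiteness: each `Θᵢ` is finite-dimensional over `k`, or
    -- `gr_Θ M` is generated over `gr A` by homogeneous elements `mgen j` of
    -- degrees `dg j`
    (hfin : (∀ i, FiniteDimensional k (Θ i)) ∨
      (∃ (s : ℕ) (mgen : Fin s → A) (dg : Fin s → ℕ),
        (∀ j, mgen j ∈ Θ (dg j)) ∧
        ∀ (i : ℕ), ∀ x ∈ Θ i, ∃ a : Fin s → A,
          (∀ j, a j ∈ Λ (i - dg j) ∧ mgen j * a j ∈ Θ i) ∧
          x - (∑ j, mgen j * a j) ∈ lowerFil Θ i))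
    -- `(gr_Θ M)_{≥ r₀}` is torsion-free over `gr A`
    (r₀ : ℕ)
    (htf : ∀ r : ℕ, r₀ ≤ r → ∀ m ∈ Θ r, m ∉ lowerFil Θ r →
      ∀ (t : ℕ), ∀ a ∈ Λ t, a ∉ lowerFil Λ t →
        m * a ∉ lowerFil Θ (r + t)) :
    ∃ (j : ℤ) (N : ℕ), ∀ i : ℕ, N ≤ i →
      0 ≤ (i : ℤ) + j ∧ Θ i = Λ ((i : ℤ) + j).toNat ⊓ M :=
  canonical_filtration_general Λ hΛmono hΛexh hΛmul hAore hgrdom M Θ hΘM hΘmono hΘexh hΘmul hfin r₀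
    htf
end
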